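/- arXiv:1706.00298 — 2 statements merged into one kernel-verified Lean document; each statement's English description precedes it below -/
import Mathlib

section
/- Let c > 0, λ_L > 0, λ_N > 0, C_L > 0, C_N > 0, α_L > 0, α_N > 0 be real numbers. Let D_L and D_N be independent real-valued random variables such that D_E has probability density f_E(r) = (2λ_E·r/√(r² − c²))·e^{-2λ_E√(r² − c²)} on (c, ∞) for E ∈ {L, N}. Define A_L(r) = max{c, ((C_N/C_L)·r^{-α_N})^{-1/α_L}}. Then the probability that C_N·D_N^{-α_N} > C_L·D_L^{-α_L} (i.e., that the user connects to an NLOS base station) equals ∫_c^∞ f_N(r)·e^{-2λ_L·√(A_L(r)² − c²)} dr. -/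
open MeasureTheory ProbabilityTheory Real Filter Set Topology

/-!
Conditioning on `D_N = r`, the user connects to an NLOS base station exactly when
`C_L D_L^{-α_L} < C_N r^{-α_N}`, i.e. when `D_L > A_L(r)`, where the maximum with `c` accounts
for `D_L > c` always. By independence, the probability is `∫ f_N(r) P(D_L > A_L(r)) dr`, and
`P(D_L > a) = e^{-2λ_L √(a² - c²)}` for `a ≥ c` because `-f_L` is the derivative of this tail.
-/

namespace ProbabilityTheory.IndepFun

variable {Ω α β : Type*} {mΩ : MeasurableSpace Ω} {μ : Measure Ω} [IsFiniteMeasure μ]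
  [MeasurableSpace α] [MeasurableSpace β] {X : Ω → α} {Y : Ω → β}

lemma measure_preimage_eq_lintegral (hXY : IndepFun X Y μ) (hX : AEMeasurable X μ)
    (hY : AEMeasurable Y μ) {S : Set (α × β)} (hS : MeasurableSet S) :
    μ ((fun ω => (X ω, Y ω)) ⁻¹' S) =
      ∫⁻ x, μ.map Y (Prod.mk x ⁻¹' S) ∂μ.map X := by
  rw [← Measure.map_apply_of_aemeasurable (hX.prodMk hY) hS,
    (indepFun_iff_map_prod_eq_prod_map_map hX hY).mp hXY, Measure.prod_apply hS]

end ProbabilityTheory.IndepFun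

lemma setOf_mul_rpow_neg_lt_inter_Ioi {C a K c : ℝ} (hC : 0 < C) (ha : 0 < a) (hK : 0 < K)
    (hc : 0 ≤ c) : {x : ℝ | C * x ^ (-a) < K} ∩ Ioi c = Ioi (max c ((K / C) ^ (-1 / a))) := by
  ext x
  simp only [mem_inter_iff, mem_ofPred_eq, mem_Ioi, max_lt_iff]
  rw [and_comm]
  refine and_congr_right fun hx => ?_
  rw [← lt_div_iff₀' hC, show -1 / a = (-a)⁻¹ by rw [inv_neg, neg_div, one_div],
    rpow_inv_lt_iff_of_neg (by positivity) (hc.trans_lt hx) (neg_neg_of_pos ha)]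

section NearestDist

variable (c lam : ℝ)

/-- Tail `P(D > r)` of the distance `D` from a point at distance `c` from a line to the nearest
point of a Poisson process of intensity `λ` on that line: `D > r` iff no point lies within
`√(r² - c²)` on either side of the foot of the perpendicular. -/
noncomputable def nearestDistTail (r : ℝ) : ℝ := exp (-(2 * lam) * √(r ^ 2 - c ^ 2))

noncomputable def nearestDistDensity (r : ℝ) : ℝ :=
  2 * lam * r / √(r ^ 2 - c ^ 2) * nearestDistTail c lam r

noncomputable def nearestDistLaw : Measure ℝ :=
  volume.withDensity fun r => ENNReal.ofReal (if c < r then nearestDistDensity c lam r else 0)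

instance : SFinite (nearestDistLaw c lam) := by
  unfold nearestDistLaw
  infer_instance

variable {c lam}

lemma nearestDistDensity_nonneg (hlam : 0 ≤ lam) {r : ℝ} (hr : 0 ≤ r) :
    0 ≤ nearestDistDensity c lam r := by
  unfold nearestDistDensity nearestDistTail
  positivity

variable (c lam) in
lemma continuous_nearestDistTail : Continuous (nearestDistTail c lam) := by
  unfold nearestDistTail
  fun_prop

lemma hasDerivAt_nearestDistTail {r : ℝ} (hr : c ^ 2 < r ^ 2) :
    HasDerivAt (nearestDistTail c lam) (-nearestDistDensity c lam r) r := by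
  have hpos : r ^ 2 - c ^ 2 ≠ 0 := (sub_pos.mpr hr).ne'
  have hsqrt : HasDerivAt (fun t => √(t ^ 2 - c ^ 2)) (r / √(r ^ 2 - c ^ 2)) r := by
    convert ((hasDerivAt_pow 2 r).sub_const (c ^ 2)).sqrt hpos using 1
    norm_num
    ring
  unfold nearestDistDensity nearestDistTail
  convert (hsqrt.const_mul (-(2 * lam))).exp using 1
  ring

lemma tendsto_nearestDistTail_atTop (hlam : 0 < lam) :
    Tendsto (nearestDistTail c lam) atTop (𝓝 0) := by
  have hsq : Tendsto (fun r : ℝ => √(r ^ 2 - c ^ 2)) atTop atTop :=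
    tendsto_sqrt_atTop.comp (tendsto_atTop_add_const_right _ _ (tendsto_pow_atTop two_ne_zero))
  exact tendsto_exp_atBot.comp (hsq.const_mul_atTop_of_neg (by linarith))

lemma nearestDistLaw_Ioi (hlam : 0 < lam) {a : ℝ} (ha : |c| ≤ a) :
    nearestDistLaw c lam (Ioi a) = ENNReal.ofReal (nearestDistTail c lam a) := by
  have hderiv : ∀ r ∈ Ioi a,
      HasDerivAt (nearestDistTail c lam) (-nearestDistDensity c lam r) r :=
    fun r hr => hasDerivAt_nearestDistTail (sq_lt_sq' (by linarith [neg_abs_le c, hr.out])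
      (by linarith [le_abs_self c, hr.out]))
  have hnonneg : ∀ r ∈ Ioi a, 0 ≤ nearestDistDensity c lam r := fun r hr =>
    nearestDistDensity_nonneg hlam.le (by linarith [abs_nonneg c, hr.out])
  have hnonpos : ∀ r ∈ Ioi a, -nearestDistDensity c lam r ≤ 0 := fun r hr =>
    neg_nonpos.mpr (hnonneg r hr)
  have hcont := (continuous_nearestDistTail c lam).continuousWithinAt (s := Ici a) (x := a)
  have htendsto := tendsto_nearestDistTail_atTop (c := c) hlam
  have hint : IntegrableOn (nearestDistDensity c lam) (Ioi a) := by
    simpa using (integrableOn_Ioi_deriv_of_nonpos hcont hderiv hnonpos htendsto).neg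
  have hintegral : ∫ r in Ioi a, nearestDistDensity c lam r = nearestDistTail c lam a := by
    have := integral_Ioi_of_hasDerivAt_of_nonpos hcont hderiv hnonpos htendsto
    rw [integral_neg] at this
    linarith
  rw [nearestDistLaw, withDensity_apply _ measurableSet_Ioi,
    setLIntegral_congr_fun measurableSet_Ioi fun r hr =>
      by rw [if_pos ((le_abs_self c).trans ha |>.trans_lt hr)],
    ← ofReal_integral_eq_lintegral_ofReal hint
      (ae_restrict_of_forall_mem measurableSet_Ioi hnonneg),
    hintegral]

lemma nearestDistLaw_inter_Ioi (s : Set ℝ) :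
    nearestDistLaw c lam (s ∩ Ioi c) = nearestDistLaw c lam s := by
  refine measure_inter_conull ?_
  rw [compl_Ioi, nearestDistLaw, withDensity_apply _ measurableSet_Iic,
    setLIntegral_congr_fun measurableSet_Iic fun r hr => by rw [if_neg (not_lt.mpr hr)]]
  simp

lemma lintegral_nearestDistLaw {f : ℝ → ENNReal} (hf : Measurable f) :
    ∫⁻ r, f r ∂nearestDistLaw c lam =
      ∫⁻ r in Ioi c, ENNReal.ofReal (nearestDistDensity c lam r) * f r := by
  have hdensity : Measurable (nearestDistDensity c lam) := by
    unfold nearestDistDensity nearestDistTail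
    fun_prop
  rw [nearestDistLaw, lintegral_withDensity_eq_lintegral_mul _
    (hdensity.ite measurableSet_Ioi measurable_const).ennreal_ofReal hf,
    ← lintegral_indicator measurableSet_Ioi]
  congr with r
  by_cases hr : c < r <;> simp [hr]

lemma nearestDistLaw_setOf_mul_rpow_neg_lt (hc : 0 < c) (hlam : 0 < lam) {C a K : ℝ} (hC : 0 < C)
    (ha : 0 < a) (hK : 0 < K) :
    nearestDistLaw c lam {x | C * x ^ (-a) < K} =
      ENNReal.ofReal (nearestDistTail c lam (max c ((K / C) ^ (-1 / a)))) := by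
  rw [← nearestDistLaw_inter_Ioi, setOf_mul_rpow_neg_lt_inter_Ioi hC ha hK hc.le,
    nearestDistLaw_Ioi hlam ((abs_of_pos hc).trans_le (le_max_left _ _))]

end NearestDist

theorem prob_connect_NLOS_general
    {Ω : Type*} [MeasureSpace Ω] [IsProbabilityMeasure (ℙ : Measure Ω)]
    (c lamL lamN CL CN aL aN : ℝ)
    (hc : 0 < c) (hlamL : 0 < lamL) (hlamN : 0 < lamN)
    (hCL : 0 < CL) (hCN : 0 < CN) (haL : 0 < aL)
    (DL DN : Ω → ℝ) (hDL : Measurable DL) (hDN : Measurable DN)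
    (hindep : IndepFun DL DN ℙ)
    (fL fN : ℝ → ℝ)
    (hfL : ∀ r, fL r = (2 * lamL * r / Real.sqrt (r ^ 2 - c ^ 2)) *
      Real.exp (-(2 * lamL) * Real.sqrt (r ^ 2 - c ^ 2)))
    (hfN : ∀ r, fN r = (2 * lamN * r / Real.sqrt (r ^ 2 - c ^ 2)) *
      Real.exp (-(2 * lamN) * Real.sqrt (r ^ 2 - c ^ 2)))
    (hDLpdf : Measure.map DL ℙ =
      volume.withDensity (fun r => ENNReal.ofReal (if c < r then fL r else 0)))
    (hDNpdf : Measure.map DN ℙ =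
      volume.withDensity (fun r => ENNReal.ofReal (if c < r then fN r else 0)))
    (AL : ℝ → ℝ)
    (hAL : ∀ r, AL r = max c ((CN / CL * r ^ (-aN)) ^ (-1 / aL))) :
    (ℙ {ω | CL * (DL ω) ^ (-aL) < CN * (DN ω) ^ (-aN)}).toReal =
      ∫ r in Set.Ioi c,
        fN r * Real.exp (-(2 * lamL) * Real.sqrt ((AL r) ^ 2 - c ^ 2)) := by
  obtain rfl : fL = nearestDistDensity c lamL := funext hfL
  obtain rfl : fN = nearestDistDensity c lamN := funext hfN
  have hlawL : Measure.map DL ℙ = nearestDistLaw c lamL := hDLpdf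
  have hlawN : Measure.map DN ℙ = nearestDistLaw c lamN := hDNpdf
  have hAL_meas : Measurable AL := by
    rw [funext hAL]
    fun_prop
  set S : Set (ℝ × ℝ) := {p | CL * p.2 ^ (-aL) < CN * p.1 ^ (-aN)}
  have hS : MeasurableSet S := measurableSet_lt (by fun_prop) (by fun_prop)
  have hsection (r : ℝ) (hr : c < r) :
      nearestDistLaw c lamL (Prod.mk r ⁻¹' S) =
        ENNReal.ofReal (nearestDistTail c lamL (AL r)) := by
    have hr0 := hc.trans hr
    rw [hAL, div_mul_eq_mul_div]
    exact nearestDistLaw_setOf_mul_rpow_neg_lt hc hlamL hCL haL (K := CN * r ^ (-aN))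
      (by positivity)
  have hintegrand : ∀ r ∈ Ioi c,
      0 ≤ nearestDistDensity c lamN r * nearestDistTail c lamL (AL r) :=
    fun r hr => mul_nonneg (nearestDistDensity_nonneg hlamN.le (hc.trans hr).le) (exp_pos _).le
  rw [show {ω | CL * DL ω ^ (-aL) < CN * DN ω ^ (-aN)} = (fun ω => (DN ω, DL ω)) ⁻¹' S
      from rfl,
    hindep.symm.measure_preimage_eq_lintegral hDN.aemeasurable hDL.aemeasurable hS, hlawL, hlawN,
    lintegral_nearestDistLaw (measurable_measure_prodMk_left hS)]
  change _ = ∫ r in Ioi c, nearestDistDensity c lamN r * nearestDistTail c lamL (AL r)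
  rw [integral_eq_lintegral_of_nonneg_ae (ae_restrict_of_forall_mem measurableSet_Ioi hintegrand)
      (by unfold nearestDistDensity nearestDistTail; fun_prop)]
  congr 1
  refine setLIntegral_congr_fun measurableSet_Ioi fun r hr => ?_
  rw [hsection r hr, ← ENNReal.ofReal_mul (nearestDistDensity_nonneg hlamN.le (hc.trans hr).le)]

/-- Lemma 2, Eq. (7), of the paper: the probability that the user connects to an NLOS
base station (i.e., that `C_N·D_N^{−α_N} > C_L·D_L^{−α_L}`) equals
`∫_c^∞ f_N(r)·exp (−2λ_L √(A_L(r)² − c²)) dr`. -/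
theorem prob_connect_NLOS
    {Ω : Type*} [MeasureSpace Ω] [IsProbabilityMeasure (ℙ : Measure Ω)]
    (c lamL lamN CL CN aL aN : ℝ)
    (hc : 0 < c) (hlamL : 0 < lamL) (hlamN : 0 < lamN)
    (hCL : 0 < CL) (hCN : 0 < CN) (haL : 0 < aL) (haN : 0 < aN)
    (DL DN : Ω → ℝ) (hDL : Measurable DL) (hDN : Measurable DN)
    (hindep : IndepFun DL DN ℙ)
    (fL fN : ℝ → ℝ)
    (hfL : ∀ r, fL r = (2 * lamL * r / Real.sqrt (r ^ 2 - c ^ 2)) *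
      Real.exp (-(2 * lamL) * Real.sqrt (r ^ 2 - c ^ 2)))
    (hfN : ∀ r, fN r = (2 * lamN * r / Real.sqrt (r ^ 2 - c ^ 2)) *
      Real.exp (-(2 * lamN) * Real.sqrt (r ^ 2 - c ^ 2)))
    (hDLpdf : Measure.map DL ℙ =
      volume.withDensity (fun r => ENNReal.ofReal (if c < r then fL r else 0)))
    (hDNpdf : Measure.map DN ℙ =
      volume.withDensity (fun r => ENNReal.ofReal (if c < r then fN r else 0)))
    (AL : ℝ → ℝ)
    (hAL : ∀ r, AL r = max c ((CN / CL * r ^ (-aN)) ^ (-1 / aL))) :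
    (ℙ {ω | CL * (DL ω) ^ (-aL) < CN * (DN ω) ^ (-aN)}).toReal =
      ∫ r in Set.Ioi c,
        fN r * Real.exp (-(2 * lamL) * Real.sqrt ((AL r) ^ 2 - c ^ 2)) :=
  prob_connect_NLOS_general c lamL lamN CL CN aL aN hc hlamL hlamN hCL hCN haL DL DN hDL hDN hindep
    fL fN hfL hfN hDLpdf hDNpdf AL hAL
end

section
/- Let c > 0, λ_L > 0, λ_N > 0, C_L > 0, C_N > 0, α_L > 0, α_N > 0 be real numbers. Define f_E(r) = (2λ_E·r/√(r² − c²))·e^{-2λ_E√(r² − c²)} for r > c and E ∈ {L, N}, A_L(r) = max{c, ((C_N/C_L)·r^{-α_N})^{-1/α_L}}, and A_N(r) = max{c, ((C_L/C_N)·r^{-α_L})^{-1/α_N}}. Then ∫_c^∞ f_L(r)·e^{-2λ_N·√(A_N(r)² − c²)} dr + ∫_c^∞ f_N(r)·e^{-2λ_L·√(A_L(r)² − c²)} dr = 1. -/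
/-!
Substituting `x = √(r² - c²)` turns `f_L` and `f_N` into the densities of independent exponential
variables `X ~ Exp(2λ_L)` and `Y ~ Exp(2λ_N)`, the horizontal distances to the nearest LOS and
NLOS base stations. In these coordinates the two integrals are `P(Y ≥ φ X)` and `P(X > ψ Y)`, and
the association rule gives `y < φ x ↔ ψ y < x`: the two events are complementary.
-/

open MeasureTheory Real Set ProbabilityTheory

section ProductRegion

variable {α β : Type*} [MeasurableSpace α] [MeasurableSpace β] (μ : Measure α) (ν : Measure β)
  {s : Set (α × β)}

theorem integral_measureReal_prodMk_left [IsFiniteMeasure ν] (hs : MeasurableSet s) :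
    ∫ x, ν.real (Prod.mk x ⁻¹' s) ∂μ = (μ.prod ν).real s := by
  rw [measureReal_def, Measure.prod_apply hs, ← integral_toReal
    (measurable_measure_prodMk_left hs).aemeasurable (ae_of_all _ fun _ ↦ measure_lt_top _ _)]
  rfl

theorem integral_measureReal_prodMk_right [IsFiniteMeasure μ] [SFinite ν] (hs : MeasurableSet s) :
    ∫ y, μ.real ((·, y) ⁻¹' s) ∂ν = (μ.prod ν).real s := by
  rw [measureReal_def, Measure.prod_apply_symm hs, ← integral_toReal
    (measurable_measure_prodMk_right hs).aemeasurable (ae_of_all _ fun _ ↦ measure_lt_top _ _)]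
  rfl

theorem integral_measureReal_compl_add_integral_measureReal [IsProbabilityMeasure μ]
    [IsProbabilityMeasure ν] (hs : MeasurableSet s) :
    ∫ x, ν.real (Prod.mk x ⁻¹' sᶜ) ∂μ + ∫ y, μ.real ((·, y) ⁻¹' s) ∂ν = 1 := by
  rw [integral_measureReal_prodMk_left μ ν hs.compl, integral_measureReal_prodMk_right μ ν hs,
    add_comm, measureReal_add_measureReal_compl hs, probReal_univ]

end ProductRegion

section SqrtSubstitution

variable {c : ℝ}

theorem strictMonoOn_sqrt_sq_add_sq : StrictMonoOn (fun x : ℝ ↦ √(x ^ 2 + c ^ 2)) (Ioi 0) :=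
  fun x (hx : 0 < x) y _ hxy ↦ by
    simp only
    gcongr

theorem image_sqrt_sq_add_sq_Ioi (hc : 0 ≤ c) :
    (fun x : ℝ ↦ √(x ^ 2 + c ^ 2)) '' Ioi 0 = Ioi c := by
  ext r
  constructor
  · rintro ⟨x, hx : 0 < x, rfl⟩
    change c < √(x ^ 2 + c ^ 2)
    rw [lt_sqrt hc]
    nlinarith
  · intro (hr : c < r)
    have hsq : 0 < r ^ 2 - c ^ 2 := by nlinarith
    refine ⟨√(r ^ 2 - c ^ 2), sqrt_pos.2 hsq, ?_⟩
    simp only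
    rw [sq_sqrt hsq.le, sub_add_cancel, sqrt_sq (hc.trans hr.le)]

theorem sqrt_sqrt_sq_add_sq_sub_sq {x : ℝ} (hx : 0 ≤ x) : √(√(x ^ 2 + c ^ 2) ^ 2 - c ^ 2) = x := by
  rw [sq_sqrt (by positivity), add_sub_cancel_right, sqrt_sq hx]

theorem hasDerivAt_sqrt_sq_add_sq {x : ℝ} (hx : x ≠ 0) :
    HasDerivAt (fun x ↦ √(x ^ 2 + c ^ 2)) (x / √(x ^ 2 + c ^ 2)) x := by
  have h := ((hasDerivAt_pow 2 x).add_const (c ^ 2)).sqrt (by positivity)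
  convert h using 1
  field_simp
  ring

theorem setIntegral_Ioi_div_sqrt_sq_sub_sq (hc : 0 ≤ c) (G : ℝ → ℝ) :
    ∫ r in Ioi c, r / √(r ^ 2 - c ^ 2) * G r = ∫ x in Ioi 0, G √(x ^ 2 + c ^ 2) := by
  rw [← image_sqrt_sq_add_sq_Ioi hc, integral_image_eq_integral_abs_deriv_smul measurableSet_Ioi
    (fun x (hx : 0 < x) ↦ (hasDerivAt_sqrt_sq_add_sq hx.ne').hasDerivWithinAt)
    strictMonoOn_sqrt_sq_add_sq.injOn]
  refine setIntegral_congr_fun measurableSet_Ioi fun x (hx : 0 < x) ↦ ?_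
  rw [sqrt_sqrt_sq_add_sq_sub_sq hx.le, smul_eq_mul, abs_of_pos (by positivity)]
  field_simp

end SqrtSubstitution

theorem lt_rpow_neg_one_div_iff {v K a : ℝ} (hv : 0 < v) (hK : 0 < K) (ha : 0 < a) :
    v < K ^ (-1 / a) ↔ K < v ^ (-a) := by
  rw [neg_div, one_div, ← inv_neg, lt_rpow_inv_iff_of_neg hv hK (neg_lt_zero.2 ha)]

theorem rpow_neg_one_div_lt_iff {u K a : ℝ} (hu : 0 < u) (hK : 0 < K) (ha : 0 < a) :
    K ^ (-1 / a) < u ↔ u ^ (-a) < K := by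
  rw [neg_div, one_div, ← inv_neg, rpow_inv_lt_iff_of_neg hK hu (neg_lt_zero.2 ha)]

/-- Both sides say that `CL * r ^ (-aL) < CN * ρ ^ (-aN)`. -/
theorem lt_rpow_iff_rpow_lt {CL CN aL aN r ρ : ℝ} (hCL : 0 < CL) (hCN : 0 < CN)
    (haL : 0 < aL) (haN : 0 < aN) (hr : 0 < r) (hρ : 0 < ρ) :
    ρ < (CL / CN * r ^ (-aL)) ^ (-1 / aN) ↔ (CN / CL * ρ ^ (-aN)) ^ (-1 / aL) < r := by
  rw [lt_rpow_neg_one_div_iff hρ (by positivity) haN,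
    rpow_neg_one_div_lt_iff hr (by positivity) haL, div_mul_eq_mul_div, div_lt_iff₀ hCN,
    div_mul_eq_mul_div, lt_div_iff₀' hCL, mul_comm (ρ ^ _)]

theorem lt_sqrt_max_sq_sub_sq_iff {c t y : ℝ} (hc : 0 ≤ c) (hy : 0 ≤ y) :
    y < √(max c t ^ 2 - c ^ 2) ↔ √(y ^ 2 + c ^ 2) < t := by
  have hcy : c ≤ √(y ^ 2 + c ^ 2) := le_sqrt_of_sq_le (by nlinarith)
  rw [lt_sqrt hy, lt_sub_iff_add_lt, ← sqrt_lt (by positivity) (hc.trans (le_max_left c t)),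
    lt_max_iff, or_iff_right hcy.not_gt]

theorem sqrt_max_sq_sub_sq_lt_iff {c s x : ℝ} (hc : 0 ≤ c) (hx : 0 < x) :
    √(max c s ^ 2 - c ^ 2) < x ↔ s < √(x ^ 2 + c ^ 2) := by
  have hcx : c < √(x ^ 2 + c ^ 2) := by rw [lt_sqrt hc]; nlinarith
  rw [sqrt_lt' hx, sub_lt_iff_lt_add, ← lt_sqrt (hc.trans (le_max_left c s)), max_lt_iff,
    and_iff_right hcx]

theorem lt_sqrt_exclusion_iff_sqrt_exclusion_lt {c CL CN aL aN x y : ℝ} (hc : 0 ≤ c)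
    (hCL : 0 < CL) (hCN : 0 < CN) (haL : 0 < aL) (haN : 0 < aN) (hx : 0 < x) (hy : 0 < y) :
    y < √(max c ((CL / CN * √(x ^ 2 + c ^ 2) ^ (-aL)) ^ (-1 / aN)) ^ 2 - c ^ 2) ↔
      √(max c ((CN / CL * √(y ^ 2 + c ^ 2) ^ (-aN)) ^ (-1 / aL)) ^ 2 - c ^ 2) < x := by
  rw [lt_sqrt_max_sq_sub_sq_iff hc hy.le, sqrt_max_sq_sub_sq_lt_iff hc hx]
  exact lt_rpow_iff_rpow_lt hCL hCN haL haN (by positivity) (by positivity)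

section Exponential

variable {b : ℝ}

theorem integral_expMeasure (hb : 0 ≤ b) (G : ℝ → ℝ) :
    ∫ x, G x ∂expMeasure b = ∫ x in Ioi 0, b * exp (-(b * x)) * G x := by
  rw [expMeasure, gammaMeasure, integral_withDensity_eq_integral_toReal_smul (f := gammaPDF 1 b)
    (measurable_gammaPDFReal 1 b).ennreal_ofReal (ae_of_all _ fun _ ↦ ENNReal.ofReal_lt_top),
    ← integral_Ici_eq_integral_Ioi, ← setIntegral_eq_integral_of_forall_compl_eq_zero]
  · refine setIntegral_congr_fun measurableSet_Ici fun x (hx : 0 ≤ x) ↦ ?_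
    rw [gammaPDF_of_nonneg hx, ENNReal.toReal_ofReal (by positivity)]
    simp
  · intro x (hx : ¬ 0 ≤ x)
    rw [gammaPDF_of_neg (not_le.1 hx)]
    simp

theorem ae_pos_expMeasure (hb : 0 < b) : ∀ᵐ x ∂expMeasure b, 0 < x := by
  have := isProbabilityMeasure_expMeasure hb
  have h : (expMeasure b).real (Iic 0) = 0 := by
    rw [← cdf_eq_real, cdf_expMeasure_eq hb, if_pos le_rfl]
    simp
  rw [ae_iff]
  simp only [not_lt]
  exact (measureReal_eq_zero_iff (measure_ne_top _ _)).1 h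

theorem measureReal_expMeasure_Ioi (hb : 0 < b) {t : ℝ} (ht : 0 ≤ t) :
    (expMeasure b).real (Ioi t) = exp (-(b * t)) := by
  have := isProbabilityMeasure_expMeasure hb
  rw [← compl_Iic, measureReal_compl measurableSet_Iic, probReal_univ, ← cdf_eq_real,
    cdf_expMeasure_eq hb, if_pos ht, sub_sub_cancel]

theorem measureReal_expMeasure_Ici (hb : 0 < b) {t : ℝ} (ht : 0 ≤ t) :
    (expMeasure b).real (Ici t) = exp (-(b * t)) := by
  have hsingleton : expMeasure b {t} = 0 :=
    withDensity_absolutelyContinuous _ _ (Real.volume_singleton)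
  rw [← measureReal_congr (Ioi_ae_eq_Ici' hsingleton), measureReal_expMeasure_Ioi hb ht]

theorem integral_expMeasure_comp_sqrt_sq_add_sq {c : ℝ} (hc : 0 ≤ c) (hb : 0 ≤ b) (H : ℝ → ℝ) :
    ∫ x, H √(x ^ 2 + c ^ 2) ∂expMeasure b =
      ∫ r in Ioi c, b * r / √(r ^ 2 - c ^ 2) * exp (-b * √(r ^ 2 - c ^ 2)) * H r := by
  calc ∫ x, H √(x ^ 2 + c ^ 2) ∂expMeasure b
      = ∫ x in Ioi 0, b * exp (-(b * √(√(x ^ 2 + c ^ 2) ^ 2 - c ^ 2))) * H √(x ^ 2 + c ^ 2) := by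
        rw [integral_expMeasure hb]
        refine setIntegral_congr_fun measurableSet_Ioi fun x (hx : 0 < x) ↦ ?_
        rw [sqrt_sqrt_sq_add_sq_sub_sq hx.le]
    _ = ∫ r in Ioi c, r / √(r ^ 2 - c ^ 2) * (b * exp (-(b * √(r ^ 2 - c ^ 2))) * H r) :=
        (setIntegral_Ioi_div_sqrt_sq_sub_sq hc
          fun r ↦ b * exp (-(b * √(r ^ 2 - c ^ 2))) * H r).symm
    _ = _ := by
        congr 1 with r
        rw [neg_mul]
        ring

end Exponential

/-- Lemma 2, Eq. (8), of the paper: `P_L + P_N = 1`, i.e.,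
`∫_c^∞ f_L(r)·e^{−2λ_N √(A_N(r)²−c²)} dr + ∫_c^∞ f_N(r)·e^{−2λ_L √(A_L(r)²−c²)} dr = 1`. -/
theorem prob_LOS_add_prob_NLOS_eq_one
    (c lamL lamN CL CN aL aN : ℝ)
    (hc : 0 < c) (hlamL : 0 < lamL) (hlamN : 0 < lamN)
    (hCL : 0 < CL) (hCN : 0 < CN) (haL : 0 < aL) (haN : 0 < aN)
    (fL fN : ℝ → ℝ)
    (hfL : ∀ r, r > c → fL r = (2 * lamL * r / Real.sqrt (r ^ 2 - c ^ 2)) *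
      Real.exp (-(2 * lamL) * Real.sqrt (r ^ 2 - c ^ 2)))
    (hfN : ∀ r, r > c → fN r = (2 * lamN * r / Real.sqrt (r ^ 2 - c ^ 2)) *
      Real.exp (-(2 * lamN) * Real.sqrt (r ^ 2 - c ^ 2)))
    (AL AN : ℝ → ℝ)
    (hAL : ∀ r, AL r = max c ((CN / CL * r ^ (-aN)) ^ (-1 / aL)))
    (hAN : ∀ r, AN r = max c ((CL / CN * r ^ (-aL)) ^ (-1 / aN))) :
    (∫ r in Set.Ioi c,
        fL r * Real.exp (-(2 * lamN) * Real.sqrt ((AN r) ^ 2 - c ^ 2))) +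
      (∫ r in Set.Ioi c,
        fN r * Real.exp (-(2 * lamL) * Real.sqrt ((AL r) ^ 2 - c ^ 2))) = 1 := by
  have hbL : 0 < 2 * lamL := by positivity
  have hbN : 0 < 2 * lamN := by positivity
  have := isProbabilityMeasure_expMeasure hbL
  have := isProbabilityMeasure_expMeasure hbN
  set φ : ℝ → ℝ := fun x ↦ √(AN √(x ^ 2 + c ^ 2) ^ 2 - c ^ 2)
  set ψ : ℝ → ℝ := fun y ↦ √(AL √(y ^ 2 + c ^ 2) ^ 2 - c ^ 2)
  have hφ : Measurable φ := by simp only [φ, hAN]; fun_prop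
  -- `φ` is even, so `y < φ x ↔ ψ y < x` holds only for `x > 0`.
  set s : Set (ℝ × ℝ) := {p | 0 < p.1 ∧ p.2 < φ p.1}
  have hs : MeasurableSet s := (measurableSet_lt measurable_const measurable_fst).inter
    (measurableSet_lt measurable_snd (hφ.comp measurable_fst))
  have hLOS : ∫ r in Ioi c, fL r * exp (-(2 * lamN) * √(AN r ^ 2 - c ^ 2)) =
      ∫ x, (expMeasure (2 * lamN)).real (Prod.mk x ⁻¹' sᶜ) ∂expMeasure (2 * lamL) := by
    rw [setIntegral_congr_fun measurableSet_Ioi fun r hr ↦ by rw [hfL r hr],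
      ← integral_expMeasure_comp_sqrt_sq_add_sq hc.le hbL.le]
    refine integral_congr_ae ((ae_pos_expMeasure hbL).mono fun x hx ↦ ?_)
    have hsection : Prod.mk x ⁻¹' sᶜ = Ici (φ x) := by ext y; simp [s, hx]
    beta_reduce
    rw [hsection, measureReal_expMeasure_Ici hbN (sqrt_nonneg _), neg_mul]
  have hNLOS : ∫ r in Ioi c, fN r * exp (-(2 * lamL) * √(AL r ^ 2 - c ^ 2)) =
      ∫ y, (expMeasure (2 * lamL)).real ((·, y) ⁻¹' s) ∂expMeasure (2 * lamN) := by
    rw [setIntegral_congr_fun measurableSet_Ioi fun r hr ↦ by rw [hfN r hr],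
      ← integral_expMeasure_comp_sqrt_sq_add_sq hc.le hbN.le]
    refine integral_congr_ae ((ae_pos_expMeasure hbN).mono fun y hy ↦ ?_)
    have hsection : (·, y) ⁻¹' s = Ioi (ψ y) := by
      ext x
      simp only [s, φ, ψ, hAN, hAL, mem_preimage, mem_ofPred_eq, mem_Ioi]
      have key := fun (hx : 0 < x) ↦
        lt_sqrt_exclusion_iff_sqrt_exclusion_lt hc.le hCL hCN haL haN hx hy
      exact ⟨fun ⟨hx, h⟩ ↦ (key hx).1 h,
        fun h ↦ have hx := (sqrt_nonneg _).trans_lt h; ⟨hx, (key hx).2 h⟩⟩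
    beta_reduce
    rw [hsection, measureReal_expMeasure_Ioi hbL (sqrt_nonneg _), neg_mul]
  rw [hLOS, hNLOS]
  exact integral_measureReal_compl_add_integral_measureReal _ _ hs
end
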